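/- The sequence (Λ_n(A))_{n∈ℕ}, where Λ_n(A) := K_n(A)^{−1} with K_n(A) := ∑_{τ ⪯ σ(n)} φ_τ(A) φ_τ(A)^*, is nonincreasing in the Loewner order (Λ_m(A) ⪯ Λ_n(A) for m ≥ n) and converges entrywise to a positive semidefinite matrix Λ_∞(A). Moreover: (i) Λ_∞(A) ⪯ M(c) for every n ∈ ℕ and every n-admissible family c for A; and (ii) if W is a Hermitian k×k matrix with W ⪯ M(c) for every n ∈ ℕ and every n-admissible family c for A, then W ⪯ Λ_∞(A). Thus Λ_∞(A) is the Loewner infimum of the set {M(c) : n ∈ ℕ, c n-admissible for A}. -/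

import Mathlib

open scoped BigOperators ComplexOrder

/-- `L^σ = L_{σ_1} ⋯ L_{σ_n}` for a word `σ` over the alphabet of `d` generators. -/
noncomputable def Lword {d : ℕ} {H : Type*} [NormedAddCommGroup H] [InnerProductSpace ℂ H]
    (L : Fin d → H →L[ℂ] H) (σ : List (Fin d)) : H →L[ℂ] H :=
  (σ.map L).prod

/-- Evaluation of a noncommutative polynomial at the tuple `L` of operators. -/
noncomputable def evalL {d : ℕ} {H : Type*} [NormedAddCommGroup H] [InnerProductSpace ℂ H]
    (L : Fin d → H →L[ℂ] H) : FreeAlgebra ℂ (Fin d) →ₐ[ℂ] (H →L[ℂ] H) :=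
  FreeAlgebra.lift ℂ L

/-- Evaluation of a noncommutative polynomial at a `d`-tuple `A` of `k×k` matrices. -/
noncomputable def evalA {d k : ℕ} (A : Fin d → Matrix (Fin k) (Fin k) ℂ) :
    FreeAlgebra ℂ (Fin d) →ₐ[ℂ] Matrix (Fin k) (Fin k) ℂ :=
  FreeAlgebra.lift ℂ A

/-- `A^τ = A_{τ_1} ⋯ A_{τ_m}` for a word `τ`. -/
noncomputable def Aword {d k : ℕ} (A : Fin d → Matrix (Fin k) (Fin k) ℂ)
    (τ : List (Fin d)) : Matrix (Fin k) (Fin k) ℂ :=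
  (τ.map A).prod

/-- A family `c : F_d^+ → M_k(ℂ)` is `n`-admissible for `A` if `c_τ = 0` unless `τ ⪯ σ(n)`
(equivalently `|τ| ≤ n`), and `∑_{τ ⪯ σ(n)} A^τ c_τ = I_k`.  Words of length `l` are
enumerated as `List.ofFn f` for `f : Fin l → Fin d`. -/
def Admissible {d k : ℕ} (A : Fin d → Matrix (Fin k) (Fin k) ℂ) (n : ℕ)
    (c : List (Fin d) → Matrix (Fin k) (Fin k) ℂ) : Prop :=
  (∀ τ : List (Fin d), n < τ.length → c τ = 0) ∧
  (∑ l ∈ Finset.range (n + 1), ∑ f : Fin l → Fin d,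
      Aword A (List.ofFn f) * c (List.ofFn f)) = 1

/-- `M(c) := ∑_{σ,τ ⪯ σ(n)} μ((L^σ)^* L^τ) c_σ^* c_τ`. -/
noncomputable def Mval {d k : ℕ} {H : Type*} [NormedAddCommGroup H]
    [InnerProductSpace ℂ H] [CompleteSpace H] (L : Fin d → H →L[ℂ] H)
    (μ : (H →L[ℂ] H) →ₗ[ℂ] ℂ) (n : ℕ)
    (c : List (Fin d) → Matrix (Fin k) (Fin k) ℂ) : Matrix (Fin k) (Fin k) ℂ :=
  ∑ l ∈ Finset.range (n + 1), ∑ f : Fin l → Fin d,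
    ∑ l' ∈ Finset.range (n + 1), ∑ g : Fin l' → Fin d,
      μ (star (Lword L (List.ofFn f)) * Lword L (List.ofFn g)) •
        (star (c (List.ofFn f)) * c (List.ofFn g))

/-- The Christoffel–Darboux kernel `K_n(A) := ∑_{τ ⪯ σ(n)} φ_τ(A) φ_τ(A)^*`. -/
noncomputable def Kmat {d k : ℕ} (φ : List (Fin d) → FreeAlgebra ℂ (Fin d))
    (A : Fin d → Matrix (Fin k) (Fin k) ℂ) (n : ℕ) : Matrix (Fin k) (Fin k) ℂ :=
  ∑ l ∈ Finset.range (n + 1), ∑ f : Fin l → Fin d,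
    evalA A (φ (List.ofFn f)) * star (evalA A (φ (List.ofFn f)))

/-!
Fix `n` and expand each monomial `Z^w`, `|w| ≤ n`, in the polynomials `φ_v`, `|v| ≤ n`, with
coefficient matrix `a`; the span hypothesis and the linear independence of an orthonormal family
make `a` invertible. Orthonormality turns `M(c)` into `∑_v V_vᴴ V_v` and admissibility into
`∑_v φ_v(A) V_v = 1`, where `V_v = ∑_w a_{wv} c_w`. For such `V` and `K = ∑_v φ_v(A) φ_v(A)ᴴ`,
`∑_v V_vᴴ V_v - K⁻¹ = ∑_v (V_v - φ_v(A)ᴴ K⁻¹)ᴴ (V_v - φ_v(A)ᴴ K⁻¹)`,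
so `K_n⁻¹` is the Loewner-least value of `M(c)`, attained at `V_v = φ_v(A)ᴴ K⁻¹`.
An `n`-admissible family is `m`-admissible for `m ≥ n` with the same `M(c)`, hence `K_n⁻¹`
decreases. A decreasing sequence of positive semidefinite matrices converges (its quadratic forms
decrease and stay nonnegative; polarization recovers the entries), and closedness of the positive
semidefinite cone passes both bounds to the limit.
-/

open Matrix Filter Topology
open scoped MatrixOrder

theorem LinearIndependent.exists_coeff_of_span_eq {K V ι : Type*} [Field K] [AddCommGroup V]
    [Module K V] [Fintype ι] [DecidableEq ι] {u v : ι → V} (hv : LinearIndependent K v)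
    (hspan : Submodule.span K (Set.range u) = Submodule.span K (Set.range v)) :
    ∃ a b : Matrix ι ι K, (∀ i, u i = ∑ j, a i j • v j) ∧ b * a = 1 := by
  have hu : ∀ i, ∃ a : ι → K, ∑ j, a j • v j = u i := fun i =>
    (Submodule.mem_span_range_iff_exists_fun K).1 (hspan ▸ Submodule.subset_span ⟨i, rfl⟩)
  have hv' : ∀ i, ∃ b : ι → K, ∑ j, b j • u j = v i := fun i =>
    (Submodule.mem_span_range_iff_exists_fun K).1 (hspan ▸ Submodule.subset_span ⟨i, rfl⟩)
  choose a ha using hu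
  choose b hb using hv'
  refine ⟨of a, of b, fun i => (ha i).symm, ?_⟩
  ext m j
  refine Fintype.linearIndependent_iffₛ.1 hv _ _ ?_ j
  calc ∑ j, (of b * of a) m j • v j = ∑ i, b m i • ∑ j, a i j • v j := by
        simp only [mul_apply, of_apply, Finset.sum_smul, Finset.smul_sum, smul_smul]
        exact Finset.sum_comm
    _ = ∑ j, (1 : Matrix ι ι K) m j • v j := by
        simp [ha, hb, one_apply, ite_smul]

namespace LinearMap

variable {B ι : Type*} [Ring B] [StarRing B] [Algebra ℂ B] (μ : B →ₗ[ℂ] ℂ) {v : ι → B}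

theorem linearIndependent_of_orthonormal [DecidableEq ι]
    (hv : ∀ i j, μ (star (v j) * v i) = if i = j then 1 else 0) : LinearIndependent ℂ v := by
  refine linearIndependent_iff'.2 fun s g hg i hi => ?_
  have := congrArg (fun x => μ (star (v i) * x)) hg
  simpa [Finset.mul_sum, hv, hi] using this

theorem map_star_sum_smul_mul_sum_smul [StarModule ℂ B] [Fintype ι] [DecidableEq ι]
    (hv : ∀ i j, μ (star (v j) * v i) = if i = j then 1 else 0) (x y : ι → ℂ) :
    μ (star (∑ j, x j • v j) * ∑ j, y j • v j) = ∑ j, star (x j) * y j := by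
  simp [star_sum, Finset.sum_mul, Finset.mul_sum, hv, mul_comm]

end LinearMap

namespace Matrix

section Recombine

variable {ι κ R M : Type*} [Fintype ι]

def recombine [SMul R M] [AddCommMonoid M] (a : Matrix ι κ R) (c : ι → M) (j : κ) : M :=
  ∑ i, a i j • c i

lemma recombine_recombine {ι' : Type*} [Fintype ι'] [CommSemiring R] [AddCommMonoid M]
    [Module R M] (a : Matrix ι κ R) (b : Matrix ι' ι R) (c : ι' → M) :
    recombine a (recombine b c) = recombine (b * a) c := by
  ext j
  simp only [recombine, mul_apply, Finset.smul_sum, Finset.sum_smul, smul_smul, mul_comm]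
  exact Finset.sum_comm

@[simp] lemma recombine_one [DecidableEq ι] [Semiring R] [AddCommMonoid M] [Module R M]
    (c : ι → M) : recombine (1 : Matrix ι ι R) c = c := by
  ext j
  simp [recombine, one_apply, ite_smul]

variable {m r 𝕜 : Type*} [Fintype r] [RCLike 𝕜]

lemma sum_sum_smul_conjTranspose_mul (a : Matrix ι κ 𝕜) [Fintype κ] (c : ι → Matrix r m 𝕜) :
    ∑ i, ∑ i', (∑ j, star (a i j) * a i' j) • ((c i)ᴴ * c i') =
      ∑ j, (recombine a c j)ᴴ * recombine a c j := by
  simp only [recombine, conjTranspose_sum, conjTranspose_smul, Matrix.sum_mul, Matrix.mul_sum,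
    Matrix.smul_mul, Matrix.mul_smul, Finset.smul_sum, smul_smul, Finset.sum_smul]
  refine ((Finset.sum_congr rfl fun i _ => Finset.sum_comm).trans Finset.sum_comm).trans
    (Finset.sum_congr rfl fun j _ => Finset.sum_comm.trans ?_)
  simp only [mul_comm]

lemma sum_sum_smul_mul (a : Matrix ι κ 𝕜) [Fintype κ] (Φ : κ → Matrix m r 𝕜)
    (c : ι → Matrix r m 𝕜) :
    ∑ i, (∑ j, a i j • Φ j) * c i = ∑ j, Φ j * recombine a c j := by
  simp only [recombine, Matrix.sum_mul, Matrix.mul_sum, Matrix.smul_mul, Matrix.mul_smul]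
  exact Finset.sum_comm

end Recombine

section LeastSquares

variable {ι m r 𝕜 : Type*} [Fintype ι] [Fintype m] [Fintype r] [DecidableEq m] [RCLike 𝕜]
  (Φ : ι → Matrix m r 𝕜)

lemma conjTranspose_inv_sum_mul_conjTranspose :
    (∑ j, Φ j * (Φ j)ᴴ)⁻¹ᴴ = (∑ j, Φ j * (Φ j)ᴴ)⁻¹ :=
  (posSemidef_sum _ fun j _ => posSemidef_self_mul_conjTranspose (Φ j)).isHermitian.inv

lemma sum_mul_conjTranspose_mul_inv (hK : IsUnit (∑ j, Φ j * (Φ j)ᴴ).det) :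
    ∑ j, Φ j * ((Φ j)ᴴ * (∑ j, Φ j * (Φ j)ᴴ)⁻¹) = 1 := by
  simp_rw [← Matrix.mul_assoc, ← Finset.sum_mul]
  exact mul_nonsing_inv _ hK

lemma sum_conjTranspose_mul_inv_mul_self (hK : IsUnit (∑ j, Φ j * (Φ j)ᴴ).det) :
    ∑ j, ((Φ j)ᴴ * (∑ j, Φ j * (Φ j)ᴴ)⁻¹)ᴴ * ((Φ j)ᴴ * (∑ j, Φ j * (Φ j)ᴴ)⁻¹) =
      (∑ j, Φ j * (Φ j)ᴴ)⁻¹ := by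
  simp_rw [conjTranspose_mul, conjTranspose_inv_sum_mul_conjTranspose,
    conjTranspose_conjTranspose, Matrix.mul_assoc, ← Finset.mul_sum,
    sum_mul_conjTranspose_mul_inv Φ hK, Matrix.mul_one]

theorem posSemidef_sum_conjTranspose_mul_self_sub_inv (hK : IsUnit (∑ j, Φ j * (Φ j)ᴴ).det)
    (V : ι → Matrix r m 𝕜) (hV : ∑ j, Φ j * V j = 1) :
    (∑ j, (V j)ᴴ * V j - (∑ j, Φ j * (Φ j)ᴴ)⁻¹).PosSemidef := by
  set K := ∑ j, Φ j * (Φ j)ᴴ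
  have hKH : K⁻¹ᴴ = K⁻¹ := conjTranspose_inv_sum_mul_conjTranspose Φ
  have hUU : ∑ j, ((Φ j)ᴴ * K⁻¹)ᴴ * ((Φ j)ᴴ * K⁻¹) = K⁻¹ :=
    sum_conjTranspose_mul_inv_mul_self Φ hK
  have hUV : ∑ j, ((Φ j)ᴴ * K⁻¹)ᴴ * V j = K⁻¹ := by
    simp_rw [conjTranspose_mul, hKH, conjTranspose_conjTranspose, Matrix.mul_assoc,
      ← Finset.mul_sum, hV, Matrix.mul_one]
  have hVU : ∑ j, (V j)ᴴ * ((Φ j)ᴴ * K⁻¹) = K⁻¹ := by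
    simpa [conjTranspose_sum, conjTranspose_mul, hKH] using congrArg conjTranspose hUV
  have key : ∑ j, (V j)ᴴ * V j - K⁻¹ =
      ∑ j, (V j - (Φ j)ᴴ * K⁻¹)ᴴ * (V j - (Φ j)ᴴ * K⁻¹) := by
    simp only [conjTranspose_sub, Matrix.sub_mul, Matrix.mul_sub, Finset.sum_sub_distrib, hUV,
      hVU, hUU]
    abel
  rw [key]
  exact posSemidef_sum _ fun j _ => posSemidef_conjTranspose_mul_self _

end LeastSquares

end Matrix

theorem Complex.exists_tendsto_of_antitone_of_nonneg {f : ℕ → ℂ} (hf : Antitone f)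
    (h0 : ∀ i, 0 ≤ f i) : ∃ z, Tendsto f atTop (𝓝 z) := by
  have hreal : ∀ i, ((f i).re : ℂ) = f i := fun i =>
    Complex.ext rfl (Complex.le_def.1 (h0 i)).2
  have hre : Antitone fun i => (f i).re := fun i j hij => (Complex.le_def.1 (hf hij)).1
  have hbdd : BddBelow (Set.range fun i => (f i).re) :=
    ⟨0, by rintro _ ⟨i, rfl⟩; exact (Complex.le_def.1 (h0 i)).1⟩
  exact ⟨_, ((Complex.continuous_ofReal.tendsto _).comp (tendsto_atTop_ciInf hre hbdd)).congr hreal⟩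

namespace Matrix

variable {n : Type*} [Fintype n]

theorem isClosed_setOf_posSemidef : IsClosed {A : Matrix n n ℂ | A.PosSemidef} := by
  simp_rw [posSemidef_iff_dotProduct_mulVec, Set.ofPred_and, Set.ofPred_forall]
  exact (isClosed_eq continuous_id.matrix_conjTranspose continuous_id).inter
    (isClosed_iInter fun x => isClosed_le continuous_const
      (continuous_const.dotProduct (continuous_id.matrix_mulVec continuous_const)))

theorem dotProduct_mulVec_polarization (A : Matrix n n ℂ) (x y : n → ℂ) :
    star x ⬝ᵥ A *ᵥ y = (star (x + y) ⬝ᵥ A *ᵥ (x + y) - star (x - y) ⬝ᵥ A *ᵥ (x - y)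
      - Complex.I * (star (x + Complex.I • y) ⬝ᵥ A *ᵥ (x + Complex.I • y))
      + Complex.I * (star (x - Complex.I • y) ⬝ᵥ A *ᵥ (x - Complex.I • y))) / 4 := by
  simp only [star_add, star_sub, star_smul, mulVec_add, mulVec_sub, mulVec_smul, add_dotProduct,
    sub_dotProduct, dotProduct_add, dotProduct_sub, smul_dotProduct, dotProduct_smul, smul_eq_mul,
    Complex.star_def, Complex.conj_I]
  ring_nf
  rw [Complex.I_sq]
  ring

theorem exists_tendsto_of_posSemidef_sub {Λ : ℕ → Matrix n n ℂ} (hΛ : ∀ i, (Λ i).PosSemidef)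
    (hanti : ∀ i j, i ≤ j → (Λ i - Λ j).PosSemidef) : ∃ X, Tendsto Λ atTop (𝓝 X) := by
  classical
  have hquad : ∀ x : n → ℂ, ∃ z, Tendsto (fun i => star x ⬝ᵥ Λ i *ᵥ x) atTop (𝓝 z) := by
    refine fun x => Complex.exists_tendsto_of_antitone_of_nonneg (fun i j hij => ?_)
      fun i => (hΛ i).dotProduct_mulVec_nonneg x
    simpa [sub_mulVec, dotProduct_sub] using (hanti i j hij).dotProduct_mulVec_nonneg x
  choose q hq using hquad
  have hsesq : ∀ x y : n → ℂ, ∃ z, Tendsto (fun i => star x ⬝ᵥ Λ i *ᵥ y) atTop (𝓝 z) := by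
    intro x y
    simp_rw [dotProduct_mulVec_polarization _ x y]
    exact ⟨_, ((((hq _).sub (hq _)).sub ((hq _).const_mul _)).add ((hq _).const_mul _)).div_const _⟩
  choose z hz using hsesq
  refine ⟨of fun a b => z (Pi.single a 1) (Pi.single b 1), tendsto_pi_nhds.2 fun a =>
    tendsto_pi_nhds.2 fun b => ?_⟩
  simpa [mulVec_single_one, Pi.star_single] using hz (Pi.single a 1) (Pi.single b 1)

end Matrix

abbrev BoundedWord (d n : ℕ) := (l : Fin (n + 1)) × (Fin l → Fin d)

namespace BoundedWord

variable {d n : ℕ}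

def toList (w : BoundedWord d n) : List (Fin d) := List.ofFn w.2

def ofList (τ : List (Fin d)) (h : τ.length ≤ n) : BoundedWord d n :=
  ⟨⟨τ.length, Nat.lt_succ_of_le h⟩, τ.get⟩

lemma length_toList_le (w : BoundedWord d n) : w.toList.length ≤ n := by
  simpa [toList] using Nat.lt_succ_iff.1 w.1.isLt

@[simp] lemma toList_ofList (τ : List (Fin d)) (h : τ.length ≤ n) : (ofList τ h).toList = τ :=
  List.ofFn_get τ

lemma toList_injective : Function.Injective (toList : BoundedWord d n → List (Fin d)) := by
  rintro ⟨l, f⟩ ⟨l', f'⟩ h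
  obtain rfl : l = l' := Fin.ext (by simpa [toList] using congrArg List.length h)
  simpa [toList, List.ofFn_inj] using h

@[simp] lemma ofList_toList (w : BoundedWord d n) : ofList w.toList w.length_toList_le = w :=
  toList_injective (toList_ofList _ _)

lemma range_toList : Set.range (toList : BoundedWord d n → List (Fin d)) =
    {τ | τ.length ≤ n} :=
  Set.ext fun τ => ⟨by rintro ⟨w, rfl⟩; exact w.length_toList_le, fun h => ⟨ofList τ h, by simp⟩⟩

lemma range_comp_toList {α : Type*} (g : List (Fin d) → α) :
    Set.range (g ∘ toList : BoundedWord d n → α) = g '' {τ | τ.length ≤ n} := by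
  rw [Set.range_comp, range_toList]

lemma sum_range_sum_ofFn {M : Type*} [AddCommMonoid M] (F : List (Fin d) → M) :
    ∑ l ∈ Finset.range (n + 1), ∑ f : Fin l → Fin d, F (List.ofFn f) =
      ∑ w : BoundedWord d n, F w.toList := by
  rw [Finset.sum_range (fun l => ∑ f : Fin l → Fin d, F (List.ofFn f)), Fintype.sum_sigma]
  rfl

def extend {M : Type*} [Zero M] (c : BoundedWord d n → M) (τ : List (Fin d)) : M :=
  if h : τ.length ≤ n then c (ofList τ h) else 0

lemma extend_comp_toList {M : Type*} [Zero M] (c : BoundedWord d n → M) :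
    extend c ∘ toList = c :=
  funext fun w => by simp [extend, w.length_toList_le]

lemma extend_of_lt {M : Type*} [Zero M] (c : BoundedWord d n → M) {τ : List (Fin d)}
    (h : n < τ.length) : extend c τ = 0 :=
  dif_neg (by omega)

end BoundedWord

lemma sum_range_sum_ofFn_eq_of_le {d n m : ℕ} {M : Type*} [AddCommMonoid M]
    {F : List (Fin d) → M} (hF : ∀ τ : List (Fin d), n < τ.length → F τ = 0) (hnm : n ≤ m) :
    ∑ l ∈ Finset.range (m + 1), ∑ f : Fin l → Fin d, F (List.ofFn f) =
      ∑ l ∈ Finset.range (n + 1), ∑ f : Fin l → Fin d, F (List.ofFn f) := by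
  refine (Finset.sum_subset (Finset.range_subset_range.2 (by omega)) fun l _ hl => ?_).symm
  simp only [Finset.mem_range, Order.lt_add_one_iff, not_le] at hl
  exact Finset.sum_eq_zero fun f _ => hF _ (by rw [List.length_ofFn]; omega)

lemma FreeAlgebra.lift_list_prod_map_ι {R X A : Type*} [CommSemiring R] [Semiring A]
    [Algebra R A] (f : X → A) (τ : List X) :
    FreeAlgebra.lift R f (τ.map (FreeAlgebra.ι R)).prod = (τ.map f).prod := by
  simp [map_list_prod, Function.comp_def]

section Christoffel

variable {d k : ℕ} {H : Type*} [NormedAddCommGroup H] [InnerProductSpace ℂ H] [CompleteSpace H]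
  (L : Fin d → H →L[ℂ] H) (μ : (H →L[ℂ] H) →ₗ[ℂ] ℂ) {φ : List (Fin d) → FreeAlgebra ℂ (Fin d)}
  (A : Fin d → Matrix (Fin k) (Fin k) ℂ)

lemma Kmat_eq_sum (n : ℕ) : Kmat φ A n =
    ∑ w : BoundedWord d n, evalA A (φ w.toList) * (evalA A (φ w.toList))ᴴ :=
  BoundedWord.sum_range_sum_ofFn fun τ => evalA A (φ τ) * (evalA A (φ τ))ᴴ

lemma Kmat_posDef (n : ℕ) (hφ0 : φ [] = 1) : (Kmat φ A n).PosDef := by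
  set w₀ : BoundedWord d n := .ofList [] (Nat.zero_le n)
  rw [Kmat_eq_sum, ← Finset.add_sum_erase _ _ (Finset.mem_univ w₀)]
  have hw₀ : evalA A (φ w₀.toList) = 1 := by simp [w₀, hφ0]
  rw [hw₀, Matrix.one_mul, conjTranspose_one]
  exact PosDef.one.add_posSemidef
    (posSemidef_sum _ fun w _ => posSemidef_self_mul_conjTranspose _)

lemma Mval_eq_sum (n : ℕ) (c : List (Fin d) → Matrix (Fin k) (Fin k) ℂ) :
    Mval L μ n c = ∑ w : BoundedWord d n, ∑ w' : BoundedWord d n,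
      μ (star (Lword L w.toList) * Lword L w'.toList) • ((c w.toList)ᴴ * c w'.toList) := by
  rw [Mval, BoundedWord.sum_range_sum_ofFn fun σ => ∑ l ∈ Finset.range (n + 1),
    ∑ g : Fin l → Fin d, μ (star (Lword L σ) * Lword L (List.ofFn g)) •
      (star (c σ) * c (List.ofFn g))]
  exact Finset.sum_congr rfl fun w _ => BoundedWord.sum_range_sum_ofFn fun τ =>
    μ (star (Lword L w.toList) * Lword L τ) • (star (c w.toList) * c τ)

lemma Admissible.mono {n m : ℕ} (hnm : n ≤ m) {c : List (Fin d) → Matrix (Fin k) (Fin k) ℂ}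
    (hc : Admissible A n c) : Admissible A m c := by
  refine ⟨fun τ hτ => hc.1 τ (by omega), ?_⟩
  rw [sum_range_sum_ofFn_eq_of_le (F := fun τ => Aword A τ * c τ)
    (fun τ hτ => by rw [hc.1 τ hτ, Matrix.mul_zero]) hnm, hc.2]

lemma Mval_eq_of_le {n m : ℕ} (hnm : n ≤ m) {c : List (Fin d) → Matrix (Fin k) (Fin k) ℂ}
    (hc : ∀ τ : List (Fin d), n < τ.length → c τ = 0) : Mval L μ m c = Mval L μ n c := by
  let G : List (Fin d) → List (Fin d) → Matrix (Fin k) (Fin k) ℂ := fun σ τ =>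
    μ (star (Lword L σ) * Lword L τ) • (star (c σ) * c τ)
  have hG : ∀ σ τ, n < σ.length ∨ n < τ.length → G σ τ = 0 := by
    rintro σ τ (h | h) <;> simp [G, hc _ h]
  calc Mval L μ m c
      = ∑ l ∈ Finset.range (m + 1), ∑ f : Fin l → Fin d,
          ∑ l' ∈ Finset.range (n + 1), ∑ g : Fin l' → Fin d, G (List.ofFn f) (List.ofFn g) :=
        Finset.sum_congr rfl fun l _ => Finset.sum_congr rfl fun f _ =>
          sum_range_sum_ofFn_eq_of_le (fun τ hτ => hG _ τ (.inr hτ)) hnm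
    _ = Mval L μ n c := sum_range_sum_ofFn_eq_of_le (F := fun σ => ∑ l' ∈ Finset.range (n + 1),
          ∑ g : Fin l' → Fin d, G σ (List.ofFn g))
        (fun σ hσ => Finset.sum_eq_zero fun _ _ =>
          Finset.sum_eq_zero fun _ _ => hG σ _ (.inl hσ)) hnm

section Expansion

variable {n : ℕ} {a : Matrix (BoundedWord d n) (BoundedWord d n) ℂ}

lemma list_prod_map_eq_sum_lift {B : Type*} [Semiring B] [Algebra ℂ B] (g : Fin d → B)
    (ha : ∀ w : BoundedWord d n,
      (w.toList.map (FreeAlgebra.ι ℂ)).prod = ∑ j, a w j • φ j.toList)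
    (w : BoundedWord d n) :
    (w.toList.map g).prod = ∑ j, a w j • FreeAlgebra.lift ℂ g (φ j.toList) := by
  rw [← FreeAlgebra.lift_list_prod_map_ι (R := ℂ), ha, map_sum]
  simp_rw [map_smul]

lemma Mval_eq_sum_recombine
    (horth : ∀ σ τ : List (Fin d),
      μ (star (evalL L (φ τ)) * evalL L (φ σ)) = if σ = τ then 1 else 0)
    (ha : ∀ w : BoundedWord d n,
      (w.toList.map (FreeAlgebra.ι ℂ)).prod = ∑ j, a w j • φ j.toList)
    (c : List (Fin d) → Matrix (Fin k) (Fin k) ℂ) :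
    Mval L μ n c = ∑ j, (recombine a (c ∘ BoundedWord.toList) j)ᴴ *
      recombine a (c ∘ BoundedWord.toList) j := by
  have hL : ∀ w : BoundedWord d n, Lword L w.toList = ∑ j, a w j • evalL L (φ j.toList) :=
    list_prod_map_eq_sum_lift L ha
  have hv : ∀ i j : BoundedWord d n, μ (star (evalL L (φ j.toList)) * evalL L (φ i.toList)) =
      if i = j then 1 else 0 := fun i j => by
    simp only [horth, BoundedWord.toList_injective.eq_iff]
  simp_rw [Mval_eq_sum, hL, LinearMap.map_star_sum_smul_mul_sum_smul μ hv]
  exact sum_sum_smul_conjTranspose_mul a _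

lemma sum_Aword_mul_eq_sum_recombine
    (ha : ∀ w : BoundedWord d n,
      (w.toList.map (FreeAlgebra.ι ℂ)).prod = ∑ j, a w j • φ j.toList)
    (c : List (Fin d) → Matrix (Fin k) (Fin k) ℂ) :
    ∑ l ∈ Finset.range (n + 1), ∑ f : Fin l → Fin d, Aword A (List.ofFn f) * c (List.ofFn f) =
      ∑ j, evalA A (φ j.toList) * recombine a (c ∘ BoundedWord.toList) j := by
  have hA : ∀ w : BoundedWord d n, Aword A w.toList = ∑ j, a w j • evalA A (φ j.toList) :=
    list_prod_map_eq_sum_lift A ha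
  rw [BoundedWord.sum_range_sum_ofFn fun τ => Aword A τ * c τ]
  simp_rw [hA]
  exact sum_sum_smul_mul a _ _

theorem isLeast_inv_Kmat_of_expansion (hφ0 : φ [] = 1)
    (horth : ∀ σ τ : List (Fin d),
      μ (star (evalL L (φ τ)) * evalL L (φ σ)) = if σ = τ then 1 else 0)
    (ha : ∀ w : BoundedWord d n,
      (w.toList.map (FreeAlgebra.ι ℂ)).prod = ∑ j, a w j • φ j.toList)
    {b : Matrix (BoundedWord d n) (BoundedWord d n) ℂ} (hba : b * a = 1) :
    IsLeast {M | ∃ c, Admissible A n c ∧ Mval L μ n c = M} (Kmat φ A n)⁻¹ := by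
  set Φ := fun j : BoundedWord d n => evalA A (φ j.toList)
  have hK : IsUnit (∑ j, Φ j * (Φ j)ᴴ).det := by
    rw [← Kmat_eq_sum]
    exact (isUnit_iff_isUnit_det _).1 (Kmat_posDef A n hφ0).isUnit
  set c₀ := BoundedWord.extend (recombine b fun j => (Φ j)ᴴ * (Kmat φ A n)⁻¹)
  have hc₀ : recombine a (c₀ ∘ BoundedWord.toList) = fun j => (Φ j)ᴴ * (Kmat φ A n)⁻¹ := by
    rw [BoundedWord.extend_comp_toList, recombine_recombine, hba, recombine_one]
  refine ⟨⟨c₀, ⟨fun τ => BoundedWord.extend_of_lt _, ?_⟩, ?_⟩, ?_⟩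
  · rw [sum_Aword_mul_eq_sum_recombine A ha, hc₀, Kmat_eq_sum]
    exact sum_mul_conjTranspose_mul_inv Φ hK
  · rw [Mval_eq_sum_recombine L μ horth ha, hc₀, Kmat_eq_sum]
    exact sum_conjTranspose_mul_inv_mul_self Φ hK
  · rintro _ ⟨c, hc, rfl⟩
    rw [Matrix.le_iff, Mval_eq_sum_recombine L μ horth ha, Kmat_eq_sum]
    refine posSemidef_sum_conjTranspose_mul_self_sub_inv Φ hK _ ?_
    rw [← sum_Aword_mul_eq_sum_recombine A ha]
    exact hc.2

end Expansion

lemma exists_monomial_expansion (hφ : LinearIndependent ℂ φ) {n : ℕ}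
    (hspan : Submodule.span ℂ (φ '' {τ : List (Fin d) | τ.length ≤ n}) =
      Submodule.span ℂ
        ((fun τ : List (Fin d) => (τ.map (FreeAlgebra.ι ℂ)).prod) '' {τ | τ.length ≤ n})) :
    ∃ a b : Matrix (BoundedWord d n) (BoundedWord d n) ℂ,
      (∀ w : BoundedWord d n, (w.toList.map (FreeAlgebra.ι ℂ)).prod = ∑ j, a w j • φ j.toList) ∧
        b * a = 1 := by
  refine (hφ.comp _ BoundedWord.toList_injective).exists_coeff_of_span_eq ?_
  rw [← BoundedWord.range_comp_toList, ← BoundedWord.range_comp_toList] at hspan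
  exact hspan.symm

theorem isLeast_inv_Kmat (hφ0 : φ [] = 1)
    (horth : ∀ σ τ : List (Fin d),
      μ (star (evalL L (φ τ)) * evalL L (φ σ)) = if σ = τ then 1 else 0)
    {n : ℕ} (hspan : Submodule.span ℂ (φ '' {τ : List (Fin d) | τ.length ≤ n}) =
      Submodule.span ℂ
        ((fun τ : List (Fin d) => (τ.map (FreeAlgebra.ι ℂ)).prod) '' {τ | τ.length ≤ n})) :
    IsLeast {M | ∃ c, Admissible A n c ∧ Mval L μ n c = M} (Kmat φ A n)⁻¹ := by
  have hφ : LinearIndependent ℂ φ :=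
    .of_comp (evalL L).toLinearMap (μ.linearIndependent_of_orthonormal horth)
  obtain ⟨a, b, ha, hba⟩ := exists_monomial_expansion hφ hspan
  exact isLeast_inv_Kmat_of_expansion L μ A hφ0 horth ha hba

end Christoffel

theorem christoffel_function_exists_general {d k : ℕ}
    {H : Type*} [NormedAddCommGroup H] [InnerProductSpace ℂ H] [CompleteSpace H]
    (L : Fin d → H →L[ℂ] H)
    (μ : (H →L[ℂ] H) →ₗ[ℂ] ℂ)
    (φ : List (Fin d) → FreeAlgebra ℂ (Fin d)) (hφ0 : φ [] = 1)
    (horth : ∀ σ τ : List (Fin d),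
      μ (star (evalL L (φ τ)) * evalL L (φ σ)) = if σ = τ then 1 else 0)
    (hspan : ∀ n : ℕ,
      Submodule.span ℂ (φ '' {τ : List (Fin d) | τ.length ≤ n}) =
        Submodule.span ℂ
          ((fun τ : List (Fin d) => (τ.map (FreeAlgebra.ι ℂ)).prod) ''
            {τ : List (Fin d) | τ.length ≤ n}))
    (A : Fin d → Matrix (Fin k) (Fin k) ℂ) :
    (∀ n m : ℕ, n ≤ m → ((Kmat φ A n)⁻¹ - (Kmat φ A m)⁻¹).PosSemidef) ∧
    (∃ Linf : Matrix (Fin k) (Fin k) ℂ, Linf.PosSemidef ∧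
      (∀ i j : Fin k,
        Filter.Tendsto (fun n : ℕ => (Kmat φ A n)⁻¹ i j) Filter.atTop (nhds (Linf i j))) ∧
      (∀ (n : ℕ) (c : List (Fin d) → Matrix (Fin k) (Fin k) ℂ), Admissible A n c →
        (Mval L μ n c - Linf).PosSemidef) ∧
      (∀ W : Matrix (Fin k) (Fin k) ℂ, W.IsHermitian →
        (∀ (n : ℕ) (c : List (Fin d) → Matrix (Fin k) (Fin k) ℂ), Admissible A n c →
          (Mval L μ n c - W).PosSemidef) →
        (Linf - W).PosSemidef)) := by
  have hleast := fun n => isLeast_inv_Kmat L μ A hφ0 horth (hspan n)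
  choose c hc hMc using fun n => (hleast n).1
  have hanti : ∀ n m, n ≤ m → ((Kmat φ A n)⁻¹ - (Kmat φ A m)⁻¹).PosSemidef := fun n m hnm => by
    have h := (hleast m).2 ⟨c n, (hc n).mono A hnm, rfl⟩
    rwa [Mval_eq_of_le L μ hnm (hc n).1, hMc] at h
  obtain ⟨Linf, hlim⟩ := exists_tendsto_of_posSemidef_sub
    (fun n => (Kmat_posDef A n hφ0).inv.posSemidef) hanti
  have hle : ∀ n, ((Kmat φ A n)⁻¹ - Linf).PosSemidef := fun n =>
    isClosed_setOf_posSemidef.mem_of_tendsto (tendsto_const_nhds.sub hlim)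
      (eventually_ge_atTop n |>.mono (hanti n))
  refine ⟨hanti, Linf, isClosed_setOf_posSemidef.mem_of_tendsto hlim
    (.of_forall fun n => (Kmat_posDef A n hφ0).inv.posSemidef),
    fun i j => (continuous_apply_apply i j).continuousAt.tendsto.comp hlim,
    fun n c' hc' => by simpa using ((hleast n).2 ⟨c', hc', rfl⟩).add (hle n),
    fun W _ hW => isClosed_setOf_posSemidef.mem_of_tendsto (hlim.sub_const W)
      (.of_forall fun n => hMc n ▸ hW n (c n) (hc n))⟩

/-- the Christoffel approximates `Λ_n(A) := K_n(A)⁻¹` form a Loewner-nonincreasing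
sequence converging entrywise to a positive semidefinite matrix `Λ_∞(A)`, which is the Loewner
infimum of the set `{M(c) : n ∈ ℕ, c n-admissible for A}`: `Λ_∞(A) ⪯ M(c)` for every such `c`,
and any Hermitian lower bound `W` of all the `M(c)` satisfies `W ⪯ Λ_∞(A)`. -/
theorem christoffel_function_exists {d k : ℕ} (hd : 1 ≤ d) (hk : 1 ≤ k)
    {H : Type*} [NormedAddCommGroup H] [InnerProductSpace ℂ H] [CompleteSpace H]
    (L : Fin d → H →L[ℂ] H)
    (hL : ∀ i j : Fin d, star (L i) * L j = if i = j then (1 : H →L[ℂ] H) else 0)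
    (μ : (H →L[ℂ] H) →ₗ[ℂ] ℂ)
    (hμ : ∀ a ∈ Algebra.adjoin ℂ (Set.range L), 0 ≤ μ (star a * a))
    (φ : List (Fin d) → FreeAlgebra ℂ (Fin d)) (hφ0 : φ [] = 1)
    (horth : ∀ σ τ : List (Fin d),
      μ (star (evalL L (φ τ)) * evalL L (φ σ)) = if σ = τ then 1 else 0)
    (hspan : ∀ n : ℕ,
      Submodule.span ℂ (φ '' {τ : List (Fin d) | τ.length ≤ n}) =
        Submodule.span ℂ
          ((fun τ : List (Fin d) => (τ.map (FreeAlgebra.ι ℂ)).prod) ''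
            {τ : List (Fin d) | τ.length ≤ n}))
    (A : Fin d → Matrix (Fin k) (Fin k) ℂ) :
    (∀ n m : ℕ, n ≤ m → ((Kmat φ A n)⁻¹ - (Kmat φ A m)⁻¹).PosSemidef) ∧
    (∃ Linf : Matrix (Fin k) (Fin k) ℂ, Linf.PosSemidef ∧
      (∀ i j : Fin k,
        Filter.Tendsto (fun n : ℕ => (Kmat φ A n)⁻¹ i j) Filter.atTop (nhds (Linf i j))) ∧
      (∀ (n : ℕ) (c : List (Fin d) → Matrix (Fin k) (Fin k) ℂ), Admissible A n c →
        (Mval L μ n c - Linf).PosSemidef) ∧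
      (∀ W : Matrix (Fin k) (Fin k) ℂ, W.IsHermitian →
        (∀ (n : ℕ) (c : List (Fin d) → Matrix (Fin k) (Fin k) ℂ), Admissible A n c →
          (Mval L μ n c - W).PosSemidef) →
        (Linf - W).PosSemidef)) :=
  christoffel_function_exists_general L μ φ hφ0 horth hspan A
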